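/- arXiv:1510.01844 — 2 statements merged into one kernel-verified Lean document; each statement's English description precedes it below -/
import Mathlib

section
/- Let f:(0,∞)→ℝ be a convex function with f(1)=0 that is strictly convex at 1. Let P_X be a pmf on 𝒳 with P_X(x)>0 for all x, and let W be a channel from 𝒳 to 𝒴. Then η_f(P_X,W) = 0 if and only if W has unit rank, i.e., all columns of W are equal (equivalently, the random variables X and Y with joint distribution P_{X,Y}(x,y)=W(y|x)P_X(x) are independent). -/
/-- A probability mass function on a finite set. -/
def IsPmf {𝒳 : Type*} [Fintype 𝒳] (P : 𝒳 → ℝ) : Prop :=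
  (∀ x, 0 ≤ P x) ∧ ∑ x, P x = 1

/-- A channel (column-stochastic matrix) from `𝒳` to `𝒴`: each column `W · x` is a pmf. -/
def IsChannel {𝒳 𝒴 : Type*} [Fintype 𝒳] [Fintype 𝒴] (W : 𝒴 → 𝒳 → ℝ) : Prop :=
  (∀ y x, 0 ≤ W y x) ∧ ∀ x, ∑ y, W y x = 1

/-- Action of a channel on a pmf: `(W P)(y) = ∑ₓ W(y|x) P(x)`. -/
def chanApply {𝒳 𝒴 : Type*} [Fintype 𝒳] (W : 𝒴 → 𝒳 → ℝ) (P : 𝒳 → ℝ) : 𝒴 → ℝ :=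
  fun y => ∑ x, W y x * P x

/-- `f` is strictly convex at `1`. -/
def StrictlyConvexAtOne (f : ℝ → ℝ) : Prop :=
  ∀ x y : ℝ, 0 < x → 0 < y → x ≠ y → ∀ l : ℝ, 0 < l → l < 1 →
    l * x + (1 - l) * y = 1 → f 1 < l * f x + (1 - l) * f y

/-- `f(0) := lim_{t→0⁺} f(t)`, as an extended real (the limit exists for convex `f`;
we use a `limsup` to name it). -/
noncomputable def fZero (f : ℝ → ℝ) : EReal :=
  Filter.limsup (fun t : ℝ => ((f t : ℝ) : EReal)) (nhdsWithin 0 (Set.Ioi (0 : ℝ)))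

/-- `lim_{p→0⁺} p f(1/p)`, as an extended real. -/
noncomputable def fInftySlope (f : ℝ → ℝ) : EReal :=
  Filter.limsup (fun p : ℝ => ((p * f (1 / p) : ℝ) : EReal))
    (nhdsWithin 0 (Set.Ioi (0 : ℝ)))

/-- Extended-real-valued f-divergence
`D_f(R‖P) = ∑ₓ P(x) f(R(x)/P(x))`, with the conventions `f(0) = lim_{t→0⁺} f(t)`,
`0·f(0/0) = 0`, and `0·f(r/0) = r·lim_{p→0⁺} p f(1/p)`. -/
noncomputable def fDivE {𝒳 : Type*} [Fintype 𝒳] (f : ℝ → ℝ) (R P : 𝒳 → ℝ) : EReal :=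
  ∑ x, if P x = 0 then ((R x : ℝ) : EReal) * fInftySlope f
       else if R x = 0 then ((P x : ℝ) : EReal) * fZero f
       else ((P x * f (R x / P x) : ℝ) : EReal)

/-- Contraction coefficient
`η_f(P,W) = sup { D_f(WR‖WP)/D_f(R‖P) : R pmf, 0 < D_f(R‖P) < ∞ }`,
defined to be `0` if the supremum is over the empty set. -/
noncomputable def etaF {𝒳 𝒴 : Type*} [Fintype 𝒳] [Fintype 𝒴]
    (f : ℝ → ℝ) (P : 𝒳 → ℝ) (W : 𝒴 → 𝒳 → ℝ) : EReal := by
  classical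
  exact if ({q : EReal | ∃ R : 𝒳 → ℝ, IsPmf R ∧ 0 < fDivE f R P ∧ fDivE f R P < ⊤ ∧
        q = fDivE f (chanApply W R) (chanApply W P) / fDivE f R P} : Set EReal).Nonempty
  then sSup {q : EReal | ∃ R : 𝒳 → ℝ, IsPmf R ∧ 0 < fDivE f R P ∧ fDivE f R P < ⊤ ∧
        q = fDivE f (chanApply W R) (chanApply W P) / fDivE f R P}
  else 0

open Finset in
lemma jensen_pos {ι : Type*} [Fintype ι] (f : ℝ → ℝ)
    (hconv : ConvexOn ℝ (Set.Ioi (0:ℝ)) f) (hstrict : StrictlyConvexAtOne f) (hf1 : f 1 = 0)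
    (p t : ι → ℝ) (hp : ∀ i, 0 ≤ p i) (ht : ∀ i, p i ≠ 0 → 0 < t i)
    (hsum : ∑ i, p i * t i = 1) (hps : ∑ i, p i = 1)
    (hj : ∃ j, p j ≠ 0 ∧ t j ≠ 1) :
    0 < ∑ i, p i * f (t i) := by
  classical
  obtain ⟨j, hpj, htj⟩ := hj
  set A : Finset ι := univ.filter (fun i => p i ≠ 0 ∧ t i < 1) with hA
  set B : Finset ι := univ.filter (fun i => p i ≠ 0 ∧ 1 ≤ t i) with hB
  have hAB : ∀ i, i ∉ A → i ∉ B → p i = 0 := by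
    intro i hiA hiB
    by_contra hpi
    rcases lt_or_ge (t i) 1 with h | h
    · exact hiA (by simp [hA, hpi, h])
    · exact hiB (by simp [hB, hpi, h])
  have hdisj : Disjoint A B := by
    rw [Finset.disjoint_left]
    intro i hiA hiB
    simp only [hA, hB, mem_filter, mem_univ, true_and] at hiA hiB
    exact absurd hiB.2 (not_le.mpr hiA.2)
  have hsum_ext : ∀ g : ι → ℝ, (∀ i, p i = 0 → g i = 0) →
      ∑ i ∈ A, g i + ∑ i ∈ B, g i = ∑ i, g i := by
    intro g hg
    rw [← Finset.sum_union hdisj]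
    apply Finset.sum_subset (Finset.subset_univ _)
    intro i _ hi
    simp only [Finset.mem_union] at hi
    push_neg at hi
    exact hg i (hAB i hi.1 hi.2)
  have hApos : ∀ i ∈ A, 0 < p i := fun i hi => by
    simp only [hA, mem_filter] at hi; exact (hp i).lt_of_ne (Ne.symm hi.2.1)
  have hBpos : ∀ i ∈ B, 0 < p i := fun i hi => by
    simp only [hB, mem_filter] at hi; exact (hp i).lt_of_ne (Ne.symm hi.2.1)
  have hAne : A.Nonempty := by
    by_contra hAe
    rw [Finset.not_nonempty_iff_eq_empty] at hAe
    have : ∑ i, p i < ∑ i, p i * t i := by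
      apply Finset.sum_lt_sum
      · intro i _
        rcases eq_or_ne (p i) 0 with h | h
        · simp [h]
        · have h1 : 1 ≤ t i := by
            by_contra hlt
            have : i ∈ A := by simp [hA, h, not_le.mp hlt]
            simp [hAe] at this
          nlinarith [(hp i).lt_of_ne (Ne.symm h)]
      · refine ⟨j, Finset.mem_univ j, ?_⟩
        have h1 : 1 ≤ t j := by
          by_contra hlt
          have : j ∈ A := by simp [hA, hpj, not_le.mp hlt]
          simp [hAe] at this
        have h1' : 1 < t j := lt_of_le_of_ne h1 (Ne.symm htj)
        nlinarith [(hp j).lt_of_ne (Ne.symm hpj)]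
    rw [hps, hsum] at this; exact lt_irrefl _ this
  have hBne : B.Nonempty := by
    by_contra hBe
    rw [Finset.not_nonempty_iff_eq_empty] at hBe
    have : ∑ i, p i * t i < ∑ i, p i := by
      apply Finset.sum_lt_sum
      · intro i _
        rcases eq_or_ne (p i) 0 with h | h
        · simp [h]
        · have h1 : t i < 1 := by
            by_contra hle
            have : i ∈ B := by simp [hB, h, not_lt.mp hle]
            simp [hBe] at this
          nlinarith [(hp i).lt_of_ne (Ne.symm h)]
      · refine ⟨j, Finset.mem_univ j, ?_⟩
        have h1 : t j < 1 := by
          by_contra hle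
          have : j ∈ B := by simp [hB, hpj, not_lt.mp hle]
          simp [hBe] at this
        nlinarith [(hp j).lt_of_ne (Ne.symm hpj)]
    rw [hps, hsum] at this; exact lt_irrefl _ this
  set lA := ∑ i ∈ A, p i with hlA
  set lB := ∑ i ∈ B, p i with hlB
  have hlApos : 0 < lA := Finset.sum_pos hApos hAne
  have hlBpos : 0 < lB := Finset.sum_pos hBpos hBne
  have hlsum : lA + lB = 1 := by
    rw [hlA, hlB, hsum_ext p (fun i h => h), hps]
  set sA := ∑ i ∈ A, p i * t i with hsA
  set sB := ∑ i ∈ B, p i * t i with hsB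
  have hssum : sA + sB = 1 := by
    rw [hsA, hsB, hsum_ext (fun i => p i * t i) (fun i h => by simp [h]), hsum]
  have hsApos : 0 < sA :=
    Finset.sum_pos (fun i hi => mul_pos (hApos i hi)
      (ht i (by simp only [hA, mem_filter] at hi; exact hi.2.1))) hAne
  have hsAlt : sA < lA := by
    apply Finset.sum_lt_sum_of_nonempty hAne
    intro i hi
    have h1 : t i < 1 := by simp only [hA, mem_filter] at hi; exact hi.2.2
    nlinarith [hApos i hi]
  have hsBge : lB ≤ sB := by
    apply Finset.sum_le_sum
    intro i hi
    have h1 : 1 ≤ t i := by simp only [hB, mem_filter] at hi; exact hi.2.2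
    nlinarith [hBpos i hi]
  set u := sA / lA with hu
  set v := sB / lB with hv
  have hu0 : 0 < u := div_pos hsApos hlApos
  have hu1 : u < 1 := (div_lt_one hlApos).mpr hsAlt
  have hv1 : 1 ≤ v := (le_div_iff₀ hlBpos).mpr (by linarith)
  have hv0 : 0 < v := lt_of_lt_of_le one_pos hv1
  have hcombo : lA * u + (1 - lA) * v = 1 := by
    have h1 : 1 - lA = lB := by linarith
    rw [h1, hu, hv]
    field_simp
    linarith
  have hJA : lA * f u ≤ ∑ i ∈ A, p i * f (t i) := by
    have := hconv.map_centerMass_le (t := A) (w := p) (p := t)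
      (fun i _ => hp i) (by rw [← hlA]; exact hlApos)
      (fun i hi => ht i (by simp only [hA, mem_filter] at hi; exact hi.2.1))
    simp only [Finset.centerMass, smul_eq_mul, ← hlA, Function.comp] at this
    have h2 : A.sum (fun i => p i * t i) = sA := rfl
    rw [h2] at this
    have h3 : f (lA⁻¹ * sA) = f u := by rw [hu, div_eq_inv_mul]
    rw [h3] at this
    calc lA * f u ≤ lA * (lA⁻¹ * ∑ i ∈ A, p i * f (t i)) := by
          apply mul_le_mul_of_nonneg_left _ hlApos.le
          convert this using 2
        _ = ∑ i ∈ A, p i * f (t i) := by field_simp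
  have hJB : lB * f v ≤ ∑ i ∈ B, p i * f (t i) := by
    have := hconv.map_centerMass_le (t := B) (w := p) (p := t)
      (fun i _ => hp i) (by rw [← hlB]; exact hlBpos)
      (fun i hi => ht i (by simp only [hB, mem_filter] at hi; exact hi.2.1))
    simp only [Finset.centerMass, smul_eq_mul, ← hlB, Function.comp] at this
    have h2 : B.sum (fun i => p i * t i) = sB := rfl
    rw [h2] at this
    have h3 : f (lB⁻¹ * sB) = f v := by rw [hv, div_eq_inv_mul]
    rw [h3] at this
    calc lB * f v ≤ lB * (lB⁻¹ * ∑ i ∈ B, p i * f (t i)) := by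
          apply mul_le_mul_of_nonneg_left _ hlBpos.le
          convert this using 2
        _ = ∑ i ∈ B, p i * f (t i) := by field_simp
  have hstr := hstrict u v hu0 hv0 (ne_of_lt (lt_of_lt_of_le hu1 hv1)) lA hlApos
    (by linarith) hcombo
  rw [hf1] at hstr
  have h1lA : 1 - lA = lB := by linarith
  rw [h1lA] at hstr
  have htotal : ∑ i ∈ A, p i * f (t i) + ∑ i ∈ B, p i * f (t i) = ∑ i, p i * f (t i) :=
    hsum_ext (fun i => p i * f (t i)) (fun i h => by simp [h])
  linarith

lemma ereal_coe_sum {ι : Type*} (s : Finset ι) (g : ι → ℝ) :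
    ((∑ i ∈ s, g i : ℝ) : EReal) = ∑ i ∈ s, ((g i : ℝ) : EReal) := by
  induction s using Finset.cons_induction with
  | empty => simp
  | cons a s ha ih => rw [Finset.sum_cons, Finset.sum_cons, EReal.coe_add, ih]

lemma fDivE_coe {𝒳 : Type*} [Fintype 𝒳] (f : ℝ → ℝ) (R P : 𝒳 → ℝ)
    (h0 : ∀ x, P x = 0 → R x = 0) (h1 : ∀ x, P x ≠ 0 → R x ≠ 0) :
    fDivE f R P = ((∑ x, P x * f (R x / P x) : ℝ) : EReal) := by
  rw [fDivE, ereal_coe_sum]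
  apply Finset.sum_congr rfl
  intro x _
  by_cases hP : P x = 0
  · rw [if_pos hP, h0 x hP, hP]
    norm_num
  · rw [if_neg hP, if_neg (h1 x hP)]

lemma fDivE_self {𝒳 : Type*} [Fintype 𝒳] (f : ℝ → ℝ) (hf1 : f 1 = 0) (P : 𝒳 → ℝ) :
    fDivE f P P = 0 := by
  rw [fDivE]
  apply Finset.sum_eq_zero
  intro x _
  by_cases hP : P x = 0
  · rw [if_pos hP, hP]
    norm_num
  · rw [if_neg hP, if_neg hP, div_self hP, hf1]
    norm_num

lemma chan_sum {𝒳 𝒴 : Type*} [Fintype 𝒳] [Fintype 𝒴] (W : 𝒴 → 𝒳 → ℝ) (P : 𝒳 → ℝ)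
    (hW : IsChannel W) (hP : ∑ x, P x = 1) : ∑ y, chanApply W P y = 1 := by
  unfold chanApply
  rw [Finset.sum_comm]
  have h : ∀ x : 𝒳, ∑ y, W y x * P x = P x := by
    intro x; rw [← Finset.sum_mul, hW.2 x, one_mul]
  rw [Finset.sum_congr rfl (fun x _ => h x), hP]

/-- **Independence characterization:** for `P_X > 0`, `η_f(P_X,W) = 0` iff all the
columns of `W` are equal (iff `X` and `Y` are independent). -/
theorem etaF_eq_zero_iff
    {𝒳 𝒴 : Type*} [Fintype 𝒳] [Fintype 𝒴]
    (hcardX : 2 ≤ Fintype.card 𝒳) (hcardY : 2 ≤ Fintype.card 𝒴)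
    (f : ℝ → ℝ)
    (hconv : ConvexOn ℝ (Set.Ioi (0 : ℝ)) f)
    (hstrict : StrictlyConvexAtOne f)
    (hf1 : f 1 = 0)
    (PX : 𝒳 → ℝ) (W : 𝒴 → 𝒳 → ℝ)
    (hPX : IsPmf PX) (hPXpos : ∀ x, 0 < PX x) (hW : IsChannel W) :
    etaF f PX W = 0 ↔ ∀ x₁ x₂ : 𝒳, ∀ y : 𝒴, W y x₁ = W y x₂ := by
  classical
  have hXne : Nonempty 𝒳 := Fintype.card_pos_iff.mp (by omega)
  set S : Set EReal := {q : EReal | ∃ R : 𝒳 → ℝ, IsPmf R ∧ 0 < fDivE f R PX ∧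
      fDivE f R PX < ⊤ ∧
      q = fDivE f (chanApply W R) (chanApply W PX) / fDivE f R PX} with hS
  have hetaF : etaF f PX W = if S.Nonempty then sSup S else 0 := rfl
  constructor
  · -- etaF = 0 → columns equal
    intro heta x₁ x₂ y₀
    by_contra hy
    have hx12 : x₁ ≠ x₂ := fun h => hy (by rw [h])
    set ε := PX x₂ / 2 with hε
    have hεpos : 0 < ε := by have := hPXpos x₂; rw [hε]; linarith
    set R : 𝒳 → ℝ := fun x =>
      PX x + (if x = x₁ then ε else 0) - (if x = x₂ then ε else 0) with hR
    have hRx : ∀ x, R x = PX x + (if x = x₁ then ε else 0) - (if x = x₂ then ε else 0) :=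
      fun x => rfl
    have hRpos : ∀ x, 0 < R x := by
      intro x
      rcases eq_or_ne x x₂ with h2 | h2
      · have h1 : ¬(x = x₁) := by rw [h2]; exact fun h => hx12 h.symm
        rw [hRx x, if_neg h1, if_pos h2, h2]
        have := hPXpos x₂
        rw [hε]; linarith
      · rcases eq_or_ne x x₁ with h1 | h1
        · rw [hRx x, if_pos h1, if_neg h2]
          have := hPXpos x; linarith
        · rw [hRx x, if_neg h1, if_neg h2]
          have := hPXpos x; linarith
    have hRsum : ∑ x, R x = 1 := by
      rw [Finset.sum_congr rfl (fun x _ => hRx x)]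
      rw [Finset.sum_sub_distrib, Finset.sum_add_distrib, hPX.2,
        Finset.sum_ite_eq' Finset.univ x₁ (fun _ => ε),
        Finset.sum_ite_eq' Finset.univ x₂ (fun _ => ε)]
      simp
    have hRpmf : IsPmf R := ⟨fun x => (hRpos x).le, hRsum⟩
    set b := ∑ x, PX x * f (R x / PX x) with hb
    have hbpos : 0 < b := by
      apply jensen_pos f hconv hstrict hf1 PX (fun x => R x / PX x)
        (fun x => (hPXpos x).le)
        (fun x _ => div_pos (hRpos x) (hPXpos x))
      · rw [Finset.sum_congr rfl (fun x _ => by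
          rw [mul_comm, div_mul_cancel₀ _ (ne_of_gt (hPXpos x))]), hRsum]
      · exact hPX.2
      · refine ⟨x₁, ne_of_gt (hPXpos x₁), ?_⟩
        have hRx1 : R x₁ = PX x₁ + ε := by
          rw [hRx x₁, if_pos rfl, if_neg hx12]; ring
        intro hcon
        rw [div_eq_one_iff_eq (ne_of_gt (hPXpos x₁))] at hcon
        rw [hRx1] at hcon
        linarith
    have hDR : fDivE f R PX = (b : EReal) :=
      fDivE_coe f R PX (fun x hx => absurd hx (ne_of_gt (hPXpos x)))
        (fun x _ => ne_of_gt (hRpos x))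
    set WP := chanApply W PX with hWP
    set WR := chanApply W R with hWR
    have hWPnonneg : ∀ y, 0 ≤ WP y := fun y =>
      Finset.sum_nonneg fun x _ => mul_nonneg (hW.1 y x) (hPXpos x).le
    have hWP0 : ∀ y, WP y = 0 → ∀ x, W y x = 0 := by
      intro y h x
      have := (Finset.sum_eq_zero_iff_of_nonneg
        (fun x _ => mul_nonneg (hW.1 y x) (hPXpos x).le)).mp h x (Finset.mem_univ x)
      rcases mul_eq_zero.mp this with h' | h'
      · exact h'
      · exact absurd h' (ne_of_gt (hPXpos x))
    have hWR0 : ∀ y, WP y = 0 → WR y = 0 := by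
      intro y h
      exact Finset.sum_eq_zero fun x _ => by rw [hWP0 y h x, zero_mul]
    have hWRpos : ∀ y, WP y ≠ 0 → 0 < WR y := by
      intro y h
      have hy' : ∃ x, W y x ≠ 0 := by
        by_contra hc
        push_neg at hc
        exact h (Finset.sum_eq_zero fun x _ => by rw [hc x, zero_mul])
      obtain ⟨x, hx⟩ := hy'
      apply Finset.sum_pos'
      · exact fun x' _ => mul_nonneg (hW.1 y x') (hRpos x').le
      · exact ⟨x, Finset.mem_univ x, mul_pos ((hW.1 y x).lt_of_ne (Ne.symm hx)) (hRpos x)⟩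
    set a := ∑ y, WP y * f (WR y / WP y) with ha
    have hWRsum : ∑ y, WR y = 1 := chan_sum W R hW hRsum
    have hWPsum : ∑ y, WP y = 1 := chan_sum W PX hW hPX.2
    have hWPy0 : WP y₀ ≠ 0 := by
      intro hzero
      exact hy (by rw [hWP0 y₀ hzero x₁, hWP0 y₀ hzero x₂])
    have hdiff : WR y₀ - WP y₀ = ε * (W y₀ x₁ - W y₀ x₂) := by
      have hWRy : WR y₀ = ∑ x, W y₀ x * R x := rfl
      have hWPy : WP y₀ = ∑ x, W y₀ x * PX x := rfl
      rw [hWRy, hWPy, ← Finset.sum_sub_distrib]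
      have hterm : ∀ x : 𝒳, W y₀ x * R x - W y₀ x * PX x
          = (if x = x₁ then W y₀ x * ε else 0) - (if x = x₂ then W y₀ x * ε else 0) := by
        intro x
        rw [hRx x]
        rcases eq_or_ne x x₁ with h1 | h1
        · have h2 : x ≠ x₂ := by rw [h1]; exact hx12
          rw [if_pos h1, if_pos h1, if_neg h2, if_neg h2]
          ring
        · rcases eq_or_ne x x₂ with h2 | h2
          · rw [if_neg h1, if_neg h1, if_pos h2, if_pos h2]
            ring
          · rw [if_neg h1, if_neg h1, if_neg h2, if_neg h2]
            ring
      rw [Finset.sum_congr rfl (fun x _ => hterm x), Finset.sum_sub_distrib,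
        Finset.sum_ite_eq' Finset.univ x₁ (fun x => W y₀ x * ε),
        Finset.sum_ite_eq' Finset.univ x₂ (fun x => W y₀ x * ε)]
      simp only [Finset.mem_univ, if_true]
      ring
    have hWRne : WR y₀ ≠ WP y₀ := by
      intro hcon
      rw [hcon, sub_self] at hdiff
      rcases mul_eq_zero.mp hdiff.symm with h' | h'
      · exact hεpos.ne' h'
      · exact hy (by linarith)
    have hapos : 0 < a := by
      apply jensen_pos f hconv hstrict hf1 WP (fun y => WR y / WP y) hWPnonneg
        (fun y h => div_pos (hWRpos y h) ((hWPnonneg y).lt_of_ne (Ne.symm h)))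
      · have hterm : ∀ y, WP y * (WR y / WP y) = WR y := by
          intro y
          by_cases h : WP y = 0
          · rw [h, hWR0 y h]; simp
          · rw [mul_comm, div_mul_cancel₀ _ h]
        rw [Finset.sum_congr rfl (fun y _ => hterm y), hWRsum]
      · exact hWPsum
      · refine ⟨y₀, hWPy0, ?_⟩
        intro hcon
        rw [div_eq_one_iff_eq hWPy0] at hcon
        exact hWRne hcon
    have hDA : fDivE f WR WP = (a : EReal) :=
      fDivE_coe f WR WP hWR0 (fun y h => ne_of_gt (hWRpos y h))
    have hqmem : ((a / b : ℝ) : EReal) ∈ S := by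
      refine ⟨R, hRpmf, ?_, ?_, ?_⟩
      · rw [hDR]; exact EReal.coe_pos.mpr hbpos
      · rw [hDR]; exact EReal.coe_lt_top b
      · rw [hDR, hDA, EReal.coe_div]
    have hSne : S.Nonempty := ⟨_, hqmem⟩
    rw [hetaF, if_pos hSne] at heta
    have hle : ((a / b : ℝ) : EReal) ≤ sSup S := le_sSup hqmem
    rw [heta] at hle
    have hgt : (0 : EReal) < ((a / b : ℝ) : EReal) :=
      EReal.coe_pos.mpr (div_pos hapos hbpos)
    exact absurd (lt_of_lt_of_le hgt hle) (lt_irrefl 0)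
  · -- columns equal → etaF = 0
    intro h
    obtain ⟨x0⟩ := hXne
    have hWconst : ∀ (R : 𝒳 → ℝ), (∑ x, R x = 1) → chanApply W R = chanApply W PX := by
      intro R hRs
      funext y
      have hc : ∀ (Q : 𝒳 → ℝ), (∑ x, Q x = 1) → chanApply W Q y = W y x0 := by
        intro Q hQ
        show ∑ x, W y x * Q x = W y x0
        rw [Finset.sum_congr rfl (fun x _ => by rw [h x x0 y]), ← Finset.mul_sum, hQ, mul_one]
      rw [hc R hRs, hc PX hPX.2]
    have hSzero : ∀ q ∈ S, q = 0 := by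
      rintro q ⟨R, hRpmf, _, hDlt, hq⟩
      rw [hq, hWconst R hRpmf.2, fDivE_self f hf1, EReal.zero_div]
    rw [hetaF]
    by_cases hne : S.Nonempty
    · rw [if_pos hne]
      obtain ⟨q, hq⟩ := hne
      apply le_antisymm
      · exact sSup_le fun q' hq' => le_of_eq (hSzero q' hq')
      · rw [← hSzero q hq]; exact le_sSup hq
    · rw [if_neg hne]
end

section
/- (Sub-multiplicativity of contraction coefficients.) Let f:(0,∞)→ℝ be a convex function with f(1)=0 that is strictly convex at 1. Let 𝒰, 𝒳, 𝒴 be finite sets with at least two elements each, let P_U be a pmf on 𝒰, let S be a channel from 𝒰 to 𝒳, and let W be a channel from 𝒳 to 𝒴. Set P_X = S P_U, so that the composed channel from 𝒰 to 𝒴 is WS (corresponding to a Markov chain U → X → Y). Then η_f(P_U, WS) ≤ η_f(P_U, S) · η_f(P_X, W). -/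
/-- Composition of channels: `(W ∘ S)(y|u) = ∑ₓ W(y|x) S(x|u)`. -/
def chanComp {𝒰 𝒳 𝒴 : Type*} [Fintype 𝒳] (W : 𝒴 → 𝒳 → ℝ) (S : 𝒳 → 𝒰 → ℝ) :
    𝒴 → 𝒰 → ℝ :=
  fun y u => ∑ x, W y x * S x u

/-! The perspective `(r, p) ↦ p f(r/p)`, extended to `p = 0` by the slope of `f` at infinity and
to `r = 0` by `f(0⁺)`, is subadditive (convexity of `f`, with the boundary values as limits of
secants) and homogeneous, so `D_f(WR‖WP) ≤ D_f(R‖P)` for every channel `W`. Given `R` with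
`0 < D_f(R‖P_U) < ∞`, the ratio `D_f(WSR‖WSP_U) / D_f(R‖P_U)` factors as
`D_f(SR‖P_X) / D_f(R‖P_U) · D_f(WSR‖WP_X) / D_f(SR‖P_X)`, where `D_f(SR‖P_X)` is finite by data
processing, and each factor is bounded by the corresponding contraction coefficient; if
`D_f(SR‖P_X) = 0` the ratio vanishes by data processing again. -/

open Filter Set
open scoped Topology

lemma coe_le_limsup_of_tendsto_of_eventually_le {α : Type*} {l : Filter α} [l.NeBot]
    {u h : α → ℝ} {c : ℝ} (hh : Tendsto h l (𝓝 c)) (hle : ∀ᶠ t in l, h t ≤ u t) :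
    (c : EReal) ≤ limsup (fun t => (u t : EReal)) l := by
  rw [← (EReal.tendsto_coe.2 hh).limsup_eq]
  exact limsup_le_limsup (hle.mono fun t ht => EReal.coe_le_coe_iff.2 ht)

lemma EReal.coe_mul_add_le {p a d : ℝ} {X : EReal} (hp : 0 ≤ p) (ha : (a : EReal) ≤ X) :
    ((p * a + d : ℝ) : EReal) ≤ p * X + d := by
  rw [EReal.coe_add, EReal.coe_mul]
  exact add_le_add_left (mul_le_mul_of_nonneg_left ha (EReal.coe_nonneg.2 hp)) _

lemma EReal.sum_coe_mul {ι : Type*} (s : Finset ι) {c : ι → ℝ} (hc : ∀ i, 0 ≤ c i) (a : EReal) :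
    ∑ i ∈ s, (c i : EReal) * a = ((∑ i ∈ s, c i : ℝ) : EReal) * a := by
  classical
  induction s using Finset.cons_induction with
  | empty => simp
  | cons j s hj ih =>
    rw [Finset.sum_cons, Finset.sum_cons, ih, EReal.coe_add, EReal.right_distrib_of_nonneg
      (EReal.coe_nonneg.2 (hc j)) (EReal.coe_nonneg.2 (Finset.sum_nonneg fun i _ => hc i))]

lemma EReal.div_eq_div_mul_div (a c : EReal) {b : EReal} (hb : b ≠ ⊥) (hb' : b ≠ ⊤)
    (hb₀ : b ≠ 0) : a / c = b / c * (a / b) := by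
  rw [EReal.div_mul_div_comm, mul_comm b a, EReal.mul_div_mul_cancel hb hb' hb₀]

section ConvexFunction

variable {f : ℝ → ℝ}

lemma ConvexOn.slope_le_fInftySlope (hf : ConvexOn ℝ (Ioi 0) f) {a b : ℝ} (ha : 0 < a)
    (hab : a < b) : (((f b - f a) / (b - a) : ℝ) : EReal) ≤ fInftySlope f := by
  set m := (f b - f a) / (b - a)
  have hb : 0 < b := ha.trans hab
  refine coe_le_limsup_of_tendsto_of_eventually_le (h := fun p => p * f b + (1 - p * b) * m)
    (((by fun_prop : Continuous fun p : ℝ => p * f b + (1 - p * b) * m).tendsto' 0 m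
      (by simp)).mono_left nhdsWithin_le_nhds) ?_
  filter_upwards [Ioo_mem_nhdsGT (one_div_pos.2 hb)] with p ⟨hp, hpb⟩
  have hbp : b < 1 / p := (lt_one_div hp hb).1 hpb
  have hslope : m * (1 / p - b) ≤ f (1 / p) - f b :=
    (le_div_iff₀ (sub_pos.2 hbp)).1 (hf.slope_mono_adjacent ha (hb.trans hbp) hab hbp)
  calc p * f b + (1 - p * b) * m = p * f b + p * (m * (1 / p - b)) := by field_simp
    _ ≤ p * f b + p * (f (1 / p) - f b) := by gcongr
    _ = p * f (1 / p) := by ring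

/-- The secant of `f` through `w` and `y`, evaluated at `0`, lies below `f(0⁺)`. -/
lemma ConvexOn.secant_le_fZero (hf : ConvexOn ℝ (Ioi 0) f) {w y : ℝ} (hw : 0 < w)
    (hwy : w < y) : ((f w - w * ((f y - f w) / (y - w)) : ℝ) : EReal) ≤ fZero f := by
  set m := (f y - f w) / (y - w)
  refine coe_le_limsup_of_tendsto_of_eventually_le (h := fun t => f w - (w - t) * m)
    (((by fun_prop : Continuous fun t : ℝ => f w - (w - t) * m).tendsto' 0 _
      (by simp)).mono_left nhdsWithin_le_nhds) ?_
  filter_upwards [Ioo_mem_nhdsGT hw] with t ⟨ht, htw⟩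
  have := (div_le_iff₀ (sub_pos.2 htw)).1 (hf.slope_mono_adjacent ht (hw.trans hwy) htw hwy)
  linarith

lemma ConvexOn.coe_le_mul_fInftySlope_add_mul_fZero (hf : ConvexOn ℝ (Ioi 0) f) {r p : ℝ}
    (hr : 0 < r) (hp : 0 < p) :
    ((p * f (r / p) : ℝ) : EReal) ≤ r * fInftySlope f + p * fZero f := by
  have hu : 0 < r / p := by positivity
  have hslope := hf.slope_le_fInftySlope (half_pos hu) (half_lt_self hu)
  have hsecant := hf.secant_le_fZero (half_pos hu) (half_lt_self hu)
  have hpu : p * (r / p) = r := by field_simp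
  set u := r / p
  set m := (f u - f (u / 2)) / (u - u / 2)
  have hm : (u - u / 2) * m = f u - f (u / 2) := mul_div_cancel₀ _ (by linarith)
  clear_value u m
  calc ((p * f u : ℝ) : EReal) = ((r * m + p * (f (u / 2) - u / 2 * m) : ℝ) : EReal) := by
        congr 1
        linear_combination m * hpu - p * hm
    _ ≤ r * fInftySlope f + ((p * (f (u / 2) - u / 2 * m) : ℝ) : EReal) :=
        EReal.coe_mul_add_le hr.le hslope
    _ ≤ r * fInftySlope f + p * fZero f := by
        rw [EReal.coe_mul]
        exact add_le_add_right (mul_le_mul_of_nonneg_left hsecant (EReal.coe_nonneg.2 hp.le)) _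

lemma ConvexOn.coe_le_mul_fInftySlope_add (hf : ConvexOn ℝ (Ioi 0) f) {r₁ r₂ p : ℝ}
    (hr₁ : 0 < r₁) (hr₂ : 0 < r₂) (hp : 0 < p) :
    ((p * f ((r₁ + r₂) / p) : ℝ) : EReal) ≤
      r₁ * fInftySlope f + ((p * f (r₂ / p) : ℝ) : EReal) := by
  have hlt : r₂ / p < (r₁ + r₂) / p := by gcongr; linarith
  have hslope := hf.slope_le_fInftySlope (by positivity) hlt
  have hpba : p * ((r₁ + r₂) / p - r₂ / p) = r₁ := by field_simp; ring
  set a := r₂ / p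
  set b := (r₁ + r₂) / p
  set m := (f b - f a) / (b - a)
  have hm : (b - a) * m = f b - f a := mul_div_cancel₀ _ (sub_pos.2 hlt).ne'
  clear_value a b m
  calc ((p * f b : ℝ) : EReal) = ((r₁ * m + p * f a : ℝ) : EReal) := by
        congr 1
        linear_combination m * hpba - p * hm
    _ ≤ _ := EReal.coe_mul_add_le hr₁.le hslope

lemma ConvexOn.coe_le_mul_fZero_add (hf : ConvexOn ℝ (Ioi 0) f) {r p₁ p₂ : ℝ}
    (hr : 0 < r) (hp₁ : 0 < p₁) (hp₂ : 0 < p₂) :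
    (((p₁ + p₂) * f (r / (p₁ + p₂)) : ℝ) : EReal) ≤
      p₁ * fZero f + ((p₂ * f (r / p₂) : ℝ) : EReal) := by
  have hlt : r / (p₁ + p₂) < r / p₂ := by gcongr; linarith
  have hsecant := hf.secant_le_fZero (by positivity) hlt
  have hpw : p₁ * (r / (p₁ + p₂)) = p₂ * (r / p₂ - r / (p₁ + p₂)) := by field_simp; ring
  set w := r / (p₁ + p₂)
  set y := r / p₂
  set m := (f y - f w) / (y - w)
  have hm : (y - w) * m = f y - f w := mul_div_cancel₀ _ (sub_pos.2 hlt).ne'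
  clear_value w y m
  calc (((p₁ + p₂) * f w : ℝ) : EReal) = ((p₁ * (f w - w * m) + p₂ * f y : ℝ) : EReal) := by
        congr 1
        linear_combination m * hpw + p₂ * hm
    _ ≤ _ := EReal.coe_mul_add_le hp₁.le hsecant

lemma ConvexOn.perspective_add_le (hf : ConvexOn ℝ (Ioi 0) f) {r₁ r₂ p₁ p₂ : ℝ}
    (hr₁ : 0 < r₁) (hr₂ : 0 < r₂) (hp₁ : 0 < p₁) (hp₂ : 0 < p₂) :
    (p₁ + p₂) * f ((r₁ + r₂) / (p₁ + p₂)) ≤ p₁ * f (r₁ / p₁) + p₂ * f (r₂ / p₂) := by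
  have hp : 0 < p₁ + p₂ := by positivity
  have hconv := hf.2 (mem_Ioi.2 (div_pos hr₁ hp₁)) (mem_Ioi.2 (div_pos hr₂ hp₂))
    (div_pos hp₁ hp).le (div_pos hp₂ hp).le (by field_simp)
  have harg : p₁ / (p₁ + p₂) * (r₁ / p₁) + p₂ / (p₁ + p₂) * (r₂ / p₂) = (r₁ + r₂) / (p₁ + p₂) := by
    field_simp
  simp only [smul_eq_mul] at hconv
  rw [harg] at hconv
  calc (p₁ + p₂) * f ((r₁ + r₂) / (p₁ + p₂))
      ≤ (p₁ + p₂) * (p₁ / (p₁ + p₂) * f (r₁ / p₁) + p₂ / (p₁ + p₂) * f (r₂ / p₂)) := by gcongr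
    _ = p₁ * f (r₁ / p₁) + p₂ * f (r₂ / p₂) := by field_simp

end ConvexFunction

noncomputable def fPerspective (f : ℝ → ℝ) (r p : ℝ) : EReal :=
  if p = 0 then (r : EReal) * fInftySlope f
  else if r = 0 then (p : EReal) * fZero f
  else ((p * f (r / p) : ℝ) : EReal)

section Perspective

variable {f : ℝ → ℝ}

lemma fDivE_eq_sum_fPerspective {𝒳 : Type*} [Fintype 𝒳] (R P : 𝒳 → ℝ) :
    fDivE f R P = ∑ x, fPerspective f (R x) (P x) := rfl

@[simp]
lemma fPerspective_zero_right (r : ℝ) : fPerspective f r 0 = r * fInftySlope f := if_pos rfl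

lemma fPerspective_zero_left {p : ℝ} (hp : p ≠ 0) : fPerspective f 0 p = p * fZero f := by
  rw [fPerspective, if_neg hp, if_pos rfl]

lemma fPerspective_of_ne_zero {r p : ℝ} (hp : p ≠ 0) (hr : r ≠ 0) :
    fPerspective f r p = ((p * f (r / p) : ℝ) : EReal) := by
  rw [fPerspective, if_neg hp, if_neg hr]

lemma fPerspective_mul (c r p : ℝ) :
    fPerspective f (c * r) (c * p) = c * fPerspective f r p := by
  rcases eq_or_ne c 0 with rfl | hc
  · simp
  simp only [fPerspective, mul_eq_zero, hc, false_or]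
  split_ifs
  · rw [EReal.coe_mul, mul_assoc]
  · rw [EReal.coe_mul, mul_assoc]
  · rw [mul_div_mul_left _ _ hc, ← EReal.coe_mul, mul_assoc]

lemma ConvexOn.fPerspective_add_left_le (hf : ConvexOn ℝ (Ioi 0) f) {r₁ r₂ p : ℝ}
    (hr₁ : 0 ≤ r₁) (hr₂ : 0 ≤ r₂) (hp : 0 ≤ p) :
    fPerspective f (r₁ + r₂) p ≤ fPerspective f r₁ 0 + fPerspective f r₂ p := by
  rw [fPerspective_zero_right]
  rcases hp.eq_or_lt with rfl | hp
  · rw [fPerspective_zero_right, fPerspective_zero_right, EReal.coe_add]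
    exact (EReal.right_distrib_of_nonneg (EReal.coe_nonneg.2 hr₁) (EReal.coe_nonneg.2 hr₂)).le
  rcases hr₁.eq_or_lt with rfl | hr₁
  · simp
  rw [fPerspective_of_ne_zero hp.ne' (by positivity)]
  rcases hr₂.eq_or_lt with rfl | hr₂
  · rw [add_zero, fPerspective_zero_left hp.ne']
    exact hf.coe_le_mul_fInftySlope_add_mul_fZero hr₁ hp
  · rw [fPerspective_of_ne_zero hp.ne' hr₂.ne']
    exact hf.coe_le_mul_fInftySlope_add hr₁ hr₂ hp

lemma ConvexOn.fPerspective_add_right_le (hf : ConvexOn ℝ (Ioi 0) f) {r p₁ p₂ : ℝ}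
    (hr : 0 ≤ r) (hp₁ : 0 < p₁) (hp₂ : 0 < p₂) :
    fPerspective f r (p₁ + p₂) ≤ fPerspective f 0 p₁ + fPerspective f r p₂ := by
  rw [fPerspective_zero_left hp₁.ne']
  rcases hr.eq_or_lt with rfl | hr
  · rw [fPerspective_zero_left (by positivity), fPerspective_zero_left hp₂.ne', EReal.coe_add]
    exact (EReal.right_distrib_of_nonneg (EReal.coe_nonneg.2 hp₁.le)
      (EReal.coe_nonneg.2 hp₂.le)).le
  rw [fPerspective_of_ne_zero (by positivity) hr.ne', fPerspective_of_ne_zero hp₂.ne' hr.ne']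
  exact hf.coe_le_mul_fZero_add hr hp₁ hp₂

lemma ConvexOn.fPerspective_add_le (hf : ConvexOn ℝ (Ioi 0) f) {r₁ r₂ p₁ p₂ : ℝ}
    (hr₁ : 0 ≤ r₁) (hr₂ : 0 ≤ r₂) (hp₁ : 0 ≤ p₁) (hp₂ : 0 ≤ p₂) :
    fPerspective f (r₁ + r₂) (p₁ + p₂) ≤ fPerspective f r₁ p₁ + fPerspective f r₂ p₂ := by
  rcases hp₁.eq_or_lt with rfl | hp₁
  · rw [zero_add]
    exact hf.fPerspective_add_left_le hr₁ hr₂ hp₂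
  rcases hp₂.eq_or_lt with rfl | hp₂
  · rw [add_zero, add_comm r₁, add_comm (fPerspective f r₁ p₁)]
    exact hf.fPerspective_add_left_le hr₂ hr₁ hp₁.le
  rcases hr₁.eq_or_lt with rfl | hr₁
  · rw [zero_add]
    exact hf.fPerspective_add_right_le hr₂ hp₁ hp₂
  rcases hr₂.eq_or_lt with rfl | hr₂
  · rw [add_zero, add_comm p₁, add_comm (fPerspective f r₁ p₁)]
    exact hf.fPerspective_add_right_le hr₁.le hp₂ hp₁
  rw [fPerspective_of_ne_zero (by positivity) (by positivity), fPerspective_of_ne_zero hp₁.ne'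
    hr₁.ne', fPerspective_of_ne_zero hp₂.ne' hr₂.ne', ← EReal.coe_add, EReal.coe_le_coe_iff]
  exact hf.perspective_add_le hr₁ hr₂ hp₁ hp₂

lemma ConvexOn.fPerspective_sum_le (hf : ConvexOn ℝ (Ioi 0) f) {ι : Type*} (s : Finset ι)
    {r p : ι → ℝ} (hr : ∀ i, 0 ≤ r i) (hp : ∀ i, 0 ≤ p i) :
    fPerspective f (∑ i ∈ s, r i) (∑ i ∈ s, p i) ≤ ∑ i ∈ s, fPerspective f (r i) (p i) := by
  classical
  induction s using Finset.cons_induction with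
  | empty => simp
  | cons j s hj ih =>
    simp only [Finset.sum_cons]
    exact (hf.fPerspective_add_le (hr j) (Finset.sum_nonneg fun i _ => hr i) (hp j)
      (Finset.sum_nonneg fun i _ => hp i)).trans (add_le_add_right ih _)

end Perspective

lemma chanApply_chanComp {𝒰 𝒳 𝒴 : Type*} [Fintype 𝒰] [Fintype 𝒳] (W : 𝒴 → 𝒳 → ℝ)
    (S : 𝒳 → 𝒰 → ℝ) (R : 𝒰 → ℝ) :
    chanApply (chanComp W S) R = chanApply W (chanApply S R) := by
  funext y
  simp only [chanApply, chanComp, Finset.sum_mul, Finset.mul_sum, mul_assoc]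
  exact Finset.sum_comm

section Channel

variable {𝒳 𝒴 : Type*} [Fintype 𝒳] [Fintype 𝒴] {f : ℝ → ℝ}

lemma IsPmf.chanApply {P : 𝒳 → ℝ} (hP : IsPmf P) {W : 𝒴 → 𝒳 → ℝ} (hW : IsChannel W) :
    IsPmf (chanApply W P) := by
  refine ⟨fun y => Finset.sum_nonneg fun x _ => mul_nonneg (hW.1 y x) (hP.1 x), ?_⟩
  simp only [_root_.chanApply]
  rw [Finset.sum_comm]
  simp [← Finset.sum_mul, hW.2, hP.2]

lemma ConvexOn.fDivE_nonneg (hf : ConvexOn ℝ (Ioi 0) f) (hf1 : f 1 = 0) {R P : 𝒳 → ℝ}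
    (hR : IsPmf R) (hP : IsPmf P) : 0 ≤ fDivE f R P := by
  have h := hf.fPerspective_sum_le Finset.univ hR.1 hP.1
  rwa [hR.2, hP.2, fPerspective_of_ne_zero one_ne_zero one_ne_zero, div_one, hf1, mul_zero] at h

lemma ConvexOn.fDivE_chanApply_le (hf : ConvexOn ℝ (Ioi 0) f) {W : 𝒴 → 𝒳 → ℝ} (hW : IsChannel W)
    {R P : 𝒳 → ℝ} (hR : ∀ x, 0 ≤ R x) (hP : ∀ x, 0 ≤ P x) :
    fDivE f (chanApply W R) (chanApply W P) ≤ fDivE f R P := by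
  simp only [fDivE_eq_sum_fPerspective]
  calc ∑ y, fPerspective f (chanApply W R y) (chanApply W P y)
      ≤ ∑ y, ∑ x, fPerspective f (W y x * R x) (W y x * P x) :=
        Finset.sum_le_sum fun y _ => hf.fPerspective_sum_le _
          (fun x => mul_nonneg (hW.1 y x) (hR x)) (fun x => mul_nonneg (hW.1 y x) (hP x))
    _ = ∑ x, ∑ y, (W y x : EReal) * fPerspective f (R x) (P x) := by
        simp only [fPerspective_mul]
        exact Finset.sum_comm
    _ = ∑ x, fPerspective f (R x) (P x) := by
        simp only [EReal.sum_coe_mul _ (fun y => hW.1 y _), hW.2, EReal.coe_one, one_mul]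

lemma fDivE_chanApply_div_le_etaF {P R : 𝒳 → ℝ} (W : 𝒴 → 𝒳 → ℝ) (hR : IsPmf R)
    (hpos : 0 < fDivE f R P) (hfin : fDivE f R P < ⊤) :
    fDivE f (chanApply W R) (chanApply W P) / fDivE f R P ≤ etaF f P W := by
  rw [etaF, if_pos ⟨_, R, hR, hpos, hfin, rfl⟩]
  exact le_sSup ⟨R, hR, hpos, hfin, rfl⟩

lemma etaF_le {P : 𝒳 → ℝ} {W : 𝒴 → 𝒳 → ℝ} {c : EReal} (hc : 0 ≤ c)
    (h : ∀ R : 𝒳 → ℝ, IsPmf R → 0 < fDivE f R P → fDivE f R P < ⊤ →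
      fDivE f (chanApply W R) (chanApply W P) / fDivE f R P ≤ c) :
    etaF f P W ≤ c := by
  rw [etaF]
  split_ifs
  · exact sSup_le fun q ⟨R, hR, hpos, hfin, hq⟩ => hq ▸ h R hR hpos hfin
  · exact hc

lemma ConvexOn.etaF_nonneg (hf : ConvexOn ℝ (Ioi 0) f) (hf1 : f 1 = 0) {P : 𝒳 → ℝ}
    {W : 𝒴 → 𝒳 → ℝ} (hP : IsPmf P) (hW : IsChannel W) : 0 ≤ etaF f P W := by
  rw [etaF]
  split_ifs with hne
  · obtain ⟨_, R, hR, hpos, hfin, rfl⟩ := hne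
    exact (EReal.div_nonneg (hf.fDivE_nonneg hf1 (hR.chanApply hW) (hP.chanApply hW))
      hpos.le).trans (le_sSup ⟨R, hR, hpos, hfin, rfl⟩)
  · exact le_rfl

end Channel

theorem etaF_submultiplicative_general
    {𝒰 𝒳 𝒴 : Type*} [Fintype 𝒰] [Fintype 𝒳] [Fintype 𝒴]
    (f : ℝ → ℝ)
    (hconv : ConvexOn ℝ (Set.Ioi (0 : ℝ)) f)
    (hf1 : f 1 = 0)
    (PU : 𝒰 → ℝ) (S : 𝒳 → 𝒰 → ℝ) (W : 𝒴 → 𝒳 → ℝ)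
    (hPU : IsPmf PU) (hS : IsChannel S) (hW : IsChannel W) :
    etaF f PU (chanComp W S) ≤ etaF f PU S * etaF f (chanApply S PU) W := by
  have hηS := hconv.etaF_nonneg hf1 hPU hS
  have hηW := hconv.etaF_nonneg hf1 (hPU.chanApply hS) hW
  refine etaF_le (mul_nonneg hηS hηW) fun R hR hpos hfin => ?_
  rw [chanApply_chanComp, chanApply_chanComp]
  have hDS_le := hconv.fDivE_chanApply_le hS hR.1 hPU.1
  have hDW_le := hconv.fDivE_chanApply_le hW (hR.chanApply hS).1 (hPU.chanApply hS).1
  have hDW₀ :=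
    hconv.fDivE_nonneg hf1 ((hR.chanApply hS).chanApply hW) ((hPU.chanApply hS).chanApply hW)
  rcases (hconv.fDivE_nonneg hf1 (hR.chanApply hS) (hPU.chanApply hS)).eq_or_lt with hDS | hDS
  · rw [le_antisymm (hDW_le.trans hDS.ge) hDW₀, EReal.zero_div]
    exact mul_nonneg hηS hηW
  have hDS_fin := hDS_le.trans_lt hfin
  rw [EReal.div_eq_div_mul_div _ _ hDS.ne_bot hDS_fin.ne hDS.ne']
  exact mul_le_mul (fDivE_chanApply_div_le_etaF S hR hpos hfin)
    (fDivE_chanApply_div_le_etaF W (hR.chanApply hS) hDS hDS_fin)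
    (EReal.div_nonneg hDW₀ hDS.le) hηS

/-- **Sub-multiplicativity of contraction coefficients:** for a Markov chain
`U → X → Y` given by channels `S : 𝒰 → 𝒳` and `W : 𝒳 → 𝒴` with `P_X = S P_U`,
`η_f(P_U, WS) ≤ η_f(P_U, S) · η_f(P_X, W)`. -/
theorem etaF_submultiplicative
    {𝒰 𝒳 𝒴 : Type*} [Fintype 𝒰] [Fintype 𝒳] [Fintype 𝒴]
    (hcardU : 2 ≤ Fintype.card 𝒰) (hcardX : 2 ≤ Fintype.card 𝒳)
    (hcardY : 2 ≤ Fintype.card 𝒴)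
    (f : ℝ → ℝ)
    (hconv : ConvexOn ℝ (Set.Ioi (0 : ℝ)) f)
    (hstrict : StrictlyConvexAtOne f)
    (hf1 : f 1 = 0)
    (PU : 𝒰 → ℝ) (S : 𝒳 → 𝒰 → ℝ) (W : 𝒴 → 𝒳 → ℝ)
    (hPU : IsPmf PU) (hS : IsChannel S) (hW : IsChannel W) :
    etaF f PU (chanComp W S) ≤ etaF f PU S * etaF f (chanApply S PU) W :=
  etaF_submultiplicative_general f hconv hf1 PU S W hPU hS hW
end
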